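/- For every integer n ≥ 2, the region 𝒯(3,2ⁿ) (the tuple consisting of 3 followed by n entries equal to 2) is exactly the set of points (x,y) satisfying (2n−1)/(2n+1) < x ≤ 1 and (1+x)/4 < y ≤ (1+(n+1)x)/(2n+3); its closure is the triangle with vertices ((2n−1)/(2n+1), n/(2n+1)), (1, (n+2)/(2n+3)), and (1, 1/2). -/

import Mathlib

open MeasureTheory

/-- The BCZ transform T(x,y) = (y, ⌊(1+x)/y⌋·y − x). -/
noncomputable def bcz (p : ℝ × ℝ) : ℝ × ℝ :=
  (p.2, (⌊(1 + p.1) / p.2⌋ : ℝ) * p.2 - p.1)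

/-- The Farey triangle 𝒯 = {(x,y) : 0 < x ≤ 1, 0 < y ≤ 1, x + y > 1}. -/
def fareyTriangle : Set (ℝ × ℝ) :=
  {p | 0 < p.1 ∧ p.1 ≤ 1 ∧ 0 < p.2 ∧ p.2 ≤ 1 ∧ 1 < p.1 + p.2}

/-- The region 𝒯(k) = {(x,y) ∈ 𝒯 : ⌊(1+x)/y⌋ = k}. -/
def TT (k : ℕ) : Set (ℝ × ℝ) :=
  {p | p ∈ fareyTriangle ∧ ⌊(1 + p.1) / p.2⌋ = (k : ℤ)}

/-- The region 𝒯(k₁,…,k_r) = 𝒯(k₁) ∩ T⁻¹(𝒯(k₂)) ∩ ⋯ ∩ T^{−(r−1)}(𝒯(k_r)). -/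
noncomputable def TTlist (ks : List ℕ) : Set (ℝ × ℝ) :=
  ⋂ i : Fin ks.length, (bcz^[i.1]) ⁻¹' TT (ks.get i)

/-!
On `𝒯(3)` the map is `T(x, y) = (y, 3y - x)` and on `𝒯(2)` it is `(a, b) ↦ (b, 2b - a)`, so as
long as the orbit stays in `𝒯(2)` it runs along an arithmetic progression:
`Tⁱ(x, y) = (y + (i - 1)w, y + iw)` with `w = 2y - x`. The conditions for these points to lie in
`𝒯(2)` are linear in `i`, so only the extreme indices matter; they reduce to
`(2n + 3)y ≤ 1 + (n + 1)x`, while `𝒯(3)` contributes `x ≤ 1` and `1 + x < 4y`. These three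
half-planes cut out the triangle with the given vertices minus its open edge on `4y = 1 + x`,
whose closure is the whole triangle.
-/

lemma Int.floor_div_eq_iff {α : Type*} [Field α] [LinearOrder α] [IsStrictOrderedRing α]
    [FloorRing α] {a b : α} {k : ℤ} (hb : 0 < b) :
    ⌊a / b⌋ = k ↔ k * b ≤ a ∧ a < (k + 1) * b := by
  rw [Int.floor_eq_iff, le_div_iff₀ hb, div_lt_iff₀ hb]

lemma smul_add_smul_add_smul_mem_convexHull {R E : Type*} [Field R] [LinearOrder R]
    [IsStrictOrderedRing R] [AddCommGroup E] [Module R E] {u v w : E} {a b c : R}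
    (ha : 0 ≤ a) (hb : 0 ≤ b) (hc : 0 ≤ c) (habc : a + b + c = 1) :
    a • u + b • v + c • w ∈ convexHull R {u, v, w} := by
  have := (convex_convexHull R {u, v, w}).sum_mem (t := Finset.univ) (w := ![a, b, c])
    (z := ![u, v, w]) (by simp [Fin.forall_fin_succ, ha, hb, hc])
    (by simp [Fin.sum_univ_three, habc])
    (fun i _ => subset_convexHull R _ (by fin_cases i <;> simp))
  simpa [Fin.sum_univ_three] using this

lemma closure_inter_setOf_lt_eq {E : Type*} [AddCommGroup E] [Module ℝ E] [TopologicalSpace E]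
    [ContinuousAdd E] [ContinuousSMul ℝ E] {K : Set E} (hK : IsClosed K) (hKc : Convex ℝ K)
    (f : E →ₗ[ℝ] ℝ) {c : ℝ} (hf : ∀ p ∈ K, c ≤ f p) {v : E} (hv : v ∈ K) (hcv : c < f v) :
    closure (K ∩ {p | c < f p}) = K := by
  refine (closure_minimal Set.inter_subset_left hK).antisymm fun p hp => ?_
  have hseg : openSegment ℝ v p ⊆ K ∩ {p | c < f p} := by
    rintro q ⟨a, b, ha, hb, hab, rfl⟩
    refine ⟨hKc.openSegment_subset hv hp ⟨a, b, ha, hb, hab, rfl⟩, ?_⟩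
    calc c = a * c + b * c := by rw [← add_mul, hab, one_mul]
      _ < a * f v + b * f p := add_lt_add_of_lt_of_le (mul_lt_mul_of_pos_left hcv ha)
          (mul_le_mul_of_nonneg_left (hf p hp) hb.le)
      _ = f (a • v + b • p) := by simp
  exact closure_mono hseg (segment_subset_closure_openSegment (right_mem_segment ℝ v p))

lemma mem_TT_iff {k : ℕ} {x y : ℝ} :
    (x, y) ∈ TT k ↔ (0 < x ∧ x ≤ 1 ∧ 0 < y ∧ y ≤ 1 ∧ 1 < x + y) ∧
      k * y ≤ 1 + x ∧ 1 + x < (k + 1) * y := by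
  refine and_congr_right fun h => ?_
  rw [Int.floor_div_eq_iff h.2.2.1]
  push_cast
  rfl

lemma bcz_of_mem_TT {k : ℕ} {p : ℝ × ℝ} (h : p ∈ TT k) : bcz p = (p.2, k * p.2 - p.1) := by
  rw [bcz, h.2]
  rfl

lemma TTlist_nil : TTlist [] = Set.univ := by
  simp [TTlist]

lemma TTlist_cons (k : ℕ) (ks : List ℕ) : TTlist (k :: ks) = TT k ∩ bcz ⁻¹' TTlist ks := by
  ext p
  simp only [TTlist, Set.mem_iInter, Set.mem_inter_iff, Set.mem_preimage, List.length_cons,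
    Fin.forall_fin_succ]
  simp [Function.iterate_succ_apply]

lemma mem_TTlist_replicate_two_iff (m : ℕ) (a d : ℝ) :
    (a, a + d) ∈ TTlist (List.replicate m 2) ↔
      ∀ i < m, (a + i * d, a + (i + 1) * d) ∈ TT 2 := by
  induction m generalizing a with
  | zero => simp [TTlist_nil]
  | succ m ih =>
    rw [List.replicate_succ, TTlist_cons, Nat.forall_lt_succ_left]
    simp only [CharP.cast_eq_zero, zero_mul, add_zero, zero_add, one_mul]
    refine and_congr_right fun h => ?_
    rw [Set.mem_preimage, bcz_of_mem_TT h,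
      show (2 : ℕ) * (a + d) - a = (a + d) + d by push_cast; ring, ih]
    refine forall₂_congr fun i _ => ?_
    push_cast
    ring_nf

lemma mem_TTlist_three_cons_replicate_two_iff (n : ℕ) (x y : ℝ) :
    (x, y) ∈ TTlist (3 :: List.replicate n 2) ↔
      (x, y) ∈ TT 3 ∧ ∀ i < n, (y + i * (2 * y - x), y + (i + 1) * (2 * y - x)) ∈ TT 2 := by
  rw [TTlist_cons]
  refine and_congr_right fun h => ?_
  rw [Set.mem_preimage, bcz_of_mem_TT h, show (3 : ℕ) * y - x = y + (2 * y - x) by push_cast; ring,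
    mem_TTlist_replicate_two_iff]

lemma three_twos_bounds_of_orbit {n : ℕ} (hn : 1 ≤ n) {x y : ℝ} (h₃ : (x, y) ∈ TT 3)
    (h₂ : ∀ i < n, (y + i * (2 * y - x), y + (i + 1) * (2 * y - x)) ∈ TT 2) :
    x ≤ 1 ∧ 1 + x < 4 * y ∧ (2 * n + 3) * y ≤ 1 + (n + 1) * x := by
  obtain ⟨⟨-, hx, -⟩, -, hlow⟩ := mem_TT_iff.1 h₃
  obtain ⟨m, rfl⟩ := Nat.exists_eq_add_of_le' hn
  obtain ⟨-, hlast, -⟩ := mem_TT_iff.1 (h₂ m (Nat.lt_succ_self m))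
  push_cast at hlow hlast ⊢
  exact ⟨hx, by linarith, by linarith⟩

lemma orbit_of_three_twos_bounds {n : ℕ} (hn : 2 ≤ n) {x y : ℝ} (hx : x ≤ 1)
    (hlow : 1 + x < 4 * y) (hup : (2 * n + 3) * y ≤ 1 + (n + 1) * x) :
    (x, y) ∈ TT 3 ∧ ∀ i < n, (y + i * (2 * y - x), y + (i + 1) * (2 * y - x)) ∈ TT 2 := by
  have hn' : (2 : ℝ) ≤ n := by exact_mod_cast hn
  have hw : 0 < 2 * y - x := by linarith
  -- `n ≥ 2` is what puts `(x, y)` above the diagonal `x + y = 1`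
  have hx₀ : 3 < 5 * x := by nlinarith
  have h3y : 3 * y ≤ 1 + x := by nlinarith
  refine ⟨mem_TT_iff.2 ⟨⟨by linarith, hx, by linarith, by linarith, by linarith⟩, ?_, ?_⟩,
    fun i hi => mem_TT_iff.2 ?_⟩
  · push_cast; linarith
  · push_cast; linarith
  have hi' : (i : ℝ) + 1 ≤ n := by exact_mod_cast hi
  have hiw : 0 ≤ i * (2 * y - x) := mul_nonneg i.cast_nonneg hw.le
  have hlast : (i + 2) * (2 * y - x) ≤ (n + 1) * (2 * y - x) := by nlinarith
  push_cast
  refine ⟨⟨?_, ?_, ?_, ?_, ?_⟩, ?_, ?_⟩ <;> linarith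

lemma mem_TTlist_three_cons_replicate_two_iff_bounds {n : ℕ} (hn : 2 ≤ n) (x y : ℝ) :
    (x, y) ∈ TTlist (3 :: List.replicate n 2) ↔
      x ≤ 1 ∧ 1 + x < 4 * y ∧ (2 * n + 3) * y ≤ 1 + (n + 1) * x := by
  rw [mem_TTlist_three_cons_replicate_two_iff]
  exact ⟨fun h => three_twos_bounds_of_orbit (by omega) h.1 h.2,
    fun h => orbit_of_three_twos_bounds hn h.1 h.2.1 h.2.2⟩

lemma three_twos_region_iff (n : ℕ) (x y : ℝ) :
    ((2 * (n : ℝ) - 1) / (2 * (n : ℝ) + 1) < x ∧ x ≤ 1 ∧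
        (1 + x) / 4 < y ∧ y ≤ (1 + ((n : ℝ) + 1) * x) / (2 * (n : ℝ) + 3)) ↔
      x ≤ 1 ∧ 1 + x < 4 * y ∧ (2 * n + 3) * y ≤ 1 + (n + 1) * x := by
  rw [div_lt_iff₀ (by positivity), div_lt_iff₀ (by positivity), le_div_iff₀ (by positivity)]
  constructor
  · rintro ⟨-, hx, hlow, hup⟩
    exact ⟨hx, by linarith, by linarith⟩
  · rintro ⟨hx, hlow, hup⟩
    have h₃ : (0 : ℝ) < 2 * n + 3 := by positivity
    exact ⟨by nlinarith [mul_lt_mul_of_pos_left hlow h₃], hx, by linarith, by linarith⟩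

def threeTwosTriangle (n : ℕ) : Set (ℝ × ℝ) :=
  {p | p.1 ≤ 1 ∧ 1 + p.1 ≤ 4 * p.2 ∧ (2 * n + 3) * p.2 ≤ 1 + (n + 1) * p.1}

lemma TTlist_three_cons_replicate_two_eq {n : ℕ} (hn : 2 ≤ n) :
    TTlist (3 :: List.replicate n 2) = threeTwosTriangle n ∩ {p | 1 < 4 * p.2 - p.1} := by
  ext ⟨x, y⟩
  simp only [mem_TTlist_three_cons_replicate_two_iff_bounds hn, threeTwosTriangle,
    Set.mem_inter_iff, Set.mem_ofPred_eq]
  constructor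
  · rintro ⟨hx, hlow, hup⟩
    exact ⟨⟨hx, hlow.le, hup⟩, by linarith⟩
  · rintro ⟨⟨hx, -, hup⟩, hlow⟩
    exact ⟨hx, by linarith, hup⟩

lemma convex_threeTwosTriangle (n : ℕ) : Convex ℝ (threeTwosTriangle n) := by
  rintro p ⟨hp₁, hp₂, hp₃⟩ q ⟨hq₁, hq₂, hq₃⟩ a b ha hb hab
  simp only [threeTwosTriangle, Set.mem_ofPred_eq, Prod.fst_add, Prod.snd_add, Prod.smul_fst,
    Prod.smul_snd, smul_eq_mul]
  refine ⟨?_, ?_, ?_⟩ <;>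
    nlinarith [mul_le_mul_of_nonneg_left hp₁ ha, mul_le_mul_of_nonneg_left hq₁ hb,
      mul_le_mul_of_nonneg_left hp₂ ha, mul_le_mul_of_nonneg_left hq₂ hb,
      mul_le_mul_of_nonneg_left hp₃ ha, mul_le_mul_of_nonneg_left hq₃ hb]

lemma convexHull_eq_threeTwosTriangle (n : ℕ) :
    convexHull ℝ ({((2 * (n : ℝ) - 1) / (2 * (n : ℝ) + 1), (n : ℝ) / (2 * (n : ℝ) + 1)),
        (1, ((n : ℝ) + 2) / (2 * (n : ℝ) + 3)), (1, 1 / 2)} : Set (ℝ × ℝ)) =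
      threeTwosTriangle n := by
  apply (convexHull_min _ (convex_threeTwosTriangle n)).antisymm
  · rintro ⟨x, y⟩ ⟨hx, hlow, hup⟩
    -- barycentric coordinates of `(x, y)`
    convert smul_add_smul_add_smul_mem_convexHull (R := ℝ)
      (a := (1 - x) * (2 * n + 1) / 2) (b := (2 * n + 3) * (4 * y - 1 - x) / 2)
      (c := 2 + (2 * n + 2) * x - 2 * (2 * n + 3) * y) (by nlinarith) (by nlinarith) (by linarith)
      (by ring) using 1
    ext <;> simp <;> field_simp <;> ring
  · simp only [Set.insert_subset_iff, Set.singleton_subset_iff, threeTwosTriangle,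
      Set.mem_ofPred_eq]
    refine ⟨⟨?_, ?_, ?_⟩, ⟨?_, ?_, ?_⟩, ?_, ?_, ?_⟩ <;> field_simp <;> linarith

/-- For n ≥ 2, the region 𝒯(3,2ⁿ) is exactly the set of points (x,y) with
(2n−1)/(2n+1) < x ≤ 1 and (1+x)/4 < y ≤ (1+(n+1)x)/(2n+3); its closure is the triangle with
vertices ((2n−1)/(2n+1), n/(2n+1)), (1, (n+2)/(2n+3)), (1, 1/2). -/
theorem TT_three_twos (n : ℕ) (hn : 2 ≤ n) :
    TTlist (3 :: List.replicate n 2) =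
      {p : ℝ × ℝ | (2 * (n : ℝ) - 1) / (2 * (n : ℝ) + 1) < p.1 ∧ p.1 ≤ 1 ∧
        (1 + p.1) / 4 < p.2 ∧ p.2 ≤ (1 + ((n : ℝ) + 1) * p.1) / (2 * (n : ℝ) + 3)} ∧
    closure (TTlist (3 :: List.replicate n 2)) =
      convexHull ℝ ({((2 * (n : ℝ) - 1) / (2 * (n : ℝ) + 1), (n : ℝ) / (2 * (n : ℝ) + 1)),
        (1, ((n : ℝ) + 2) / (2 * (n : ℝ) + 3)), (1, 1 / 2)} : Set (ℝ × ℝ)) := by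
  refine ⟨Set.ext fun ⟨x, y⟩ => (mem_TTlist_three_cons_replicate_two_iff_bounds hn x y).trans
    (three_twos_region_iff n x y).symm, ?_⟩
  have hK := convexHull_eq_threeTwosTriangle n
  have hclosed : IsClosed (threeTwosTriangle n) :=
    hK ▸ ((Set.toFinite _).isCompact_convexHull ℝ).isClosed
  have hv : (1, ((n : ℝ) + 2) / (2 * (n : ℝ) + 3)) ∈ threeTwosTriangle n :=
    hK ▸ subset_convexHull ℝ _ (by simp)
  rw [TTlist_three_cons_replicate_two_eq hn, hK]
  refine closure_inter_setOf_lt_eq hclosed (convex_threeTwosTriangle n)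
    ((4 : ℝ) • LinearMap.snd ℝ ℝ ℝ - LinearMap.fst ℝ ℝ ℝ) (fun p hp => ?_) hv ?_
  · show 1 ≤ 4 * p.2 - p.1
    linarith [hp.2.1]
  · show 1 < 4 * (((n : ℝ) + 2) / (2 * n + 3)) - 1
    rw [lt_sub_iff_add_lt, mul_div_assoc', lt_div_iff₀ (by positivity)]
    linarith
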